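/- arXiv:1803.06072 — 4 statements merged into one kernel-verified Lean document; each statement's English description precedes it below -/
import Mathlib

section
/- For a, b, c ∈ ℂ with Re(c - a - b) > 0 and c not a nonpositive integer, ₂F₁(a, b; c; 1) = Γ(c)Γ(c-a-b)/(Γ(c-a)Γ(c-b)) (Gauss summation formula). -/
/-!
Write `F(c)` for `₂F₁(a,b;c;1)` and `t_k` for its terms. Telescoping with the term ratio
`t_{k+1}/t_k = (a+k)(b+k)/((c+k)(k+1))` gives Gauss's contiguous relation
`c (c-a-b) F(c) = (c-a)(c-b) F(c+1)`: the partial sums of the difference are `-c n t_n`, and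
`n t_n → 0` since `t_{n+1} ~ Γ(c)/(Γ(a)Γ(b)) n^{a+b-c-1}` by Euler's limit formula for `Γ`.
Iterating, `F(c) = (c-a)_n (c-b)_n / ((c)_n (c-a-b)_n) · F(c+n)`. As `n → ∞` the Pochhammer ratio
tends to `Γ(c)Γ(c-a-b)/(Γ(c-a)Γ(c-b))`, again by Euler's limit formula, and `F(c+n) → 1` by
dominated convergence.
-/

open Complex

/-- The `k`-th term of the Gauss hypergeometric series ₂F₁(a,b;c;x). -/
noncomputable def F21term (a b c x : ℂ) (k : ℕ) : ℂ :=
  (Polynomial.eval a (ascPochhammer ℂ k) * Polynomial.eval b (ascPochhammer ℂ k)) /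
    (Polynomial.eval c (ascPochhammer ℂ k) * (Nat.factorial k)) * x ^ k

/-- The Gauss hypergeometric function ₂F₁(a,b;c;x). -/
noncomputable def F21 (a b c x : ℂ) : ℂ := ∑' k : ℕ, F21term a b c x k

open Filter Finset Polynomial Topology

theorem ascPochhammer_eval_eq_prod_range {R : Type*} [CommSemiring R] (x : R) (n : ℕ) :
    (ascPochhammer R n).eval x = ∏ j ∈ range n, (x + j) := by
  induction n with
  | zero => simp
  | succ n ih => rw [ascPochhammer_succ_eval, ih, prod_range_succ]

theorem ascPochhammer_eval_succ_left {R : Type*} [CommSemiring R] (x : R) (n : ℕ) :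
    (ascPochhammer R (n + 1)).eval x = x * (ascPochhammer R n).eval (x + 1) := by
  simp [ascPochhammer_succ_left, eval_comp]

theorem ascPochhammer_eval_ne_zero {R : Type*} [CommRing R] [IsDomain R] {c : R}
    (hc : ∀ m : ℕ, c ≠ -m) (n : ℕ) : (ascPochhammer R n).eval c ≠ 0 := by
  rw [Ne, ascPochhammer_eval_eq_zero_iff]
  rintro ⟨m, -, hm⟩
  exact hc m (by rw [hm, neg_neg])

namespace Complex

theorem ne_neg_natCast_of_re_pos {c : ℂ} (hc : 0 < c.re) (m : ℕ) : c ≠ -m := by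
  rintro rfl
  have : (0 : ℝ) ≤ m := m.cast_nonneg
  simp only [neg_re, natCast_re] at hc
  linarith

theorem add_natCast_ne_neg_natCast {c : ℂ} (hc : ∀ m : ℕ, c ≠ -m) (n m : ℕ) : c + n ≠ -m := by
  intro h
  exact hc (m + n) (by push_cast; linear_combination h)

theorem norm_le_norm_add_natCast {z : ℂ} (hz : 0 ≤ z.re) (n : ℕ) : ‖z‖ ≤ ‖z + n‖ := by
  rw [← sq_le_sq₀ (norm_nonneg _) (norm_nonneg _), Complex.sq_norm, Complex.sq_norm,
    normSq_apply, normSq_apply]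
  simp only [add_re, natCast_re, add_im, natCast_im, add_zero]
  nlinarith [(n.cast_nonneg : (0 : ℝ) ≤ n)]

theorem norm_ascPochhammer_eval_le_add_natCast {z : ℂ} (hz : 0 ≤ z.re) (n k : ℕ) :
    ‖(ascPochhammer ℂ k).eval z‖ ≤ ‖(ascPochhammer ℂ k).eval (z + n)‖ := by
  simp only [ascPochhammer_eval_eq_prod_range, norm_prod]
  refine prod_le_prod (fun _ _ ↦ norm_nonneg _) fun j _ ↦ ?_
  rw [add_right_comm]
  exact norm_le_norm_add_natCast (by simpa using add_nonneg hz j.cast_nonneg) n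

theorem GammaSeq_eq_div_ascPochhammer (s : ℂ) (n : ℕ) :
    GammaSeq s n = (n : ℂ) ^ s * n.factorial / (ascPochhammer ℂ (n + 1)).eval s := by
  rw [GammaSeq, ascPochhammer_eval_eq_prod_range]

theorem GammaSeq_div_GammaSeq (x y : ℂ) {n : ℕ} (hn : n ≠ 0) :
    GammaSeq x n / GammaSeq y n =
      (n : ℂ) ^ (x - y) * (ascPochhammer ℂ (n + 1)).eval y / (ascPochhammer ℂ (n + 1)).eval x := by
  have hn' : (n : ℂ) ≠ 0 := Nat.cast_ne_zero.2 hn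
  have hfac : (n.factorial : ℂ) ≠ 0 := Nat.cast_ne_zero.2 n.factorial_ne_zero
  have hy : (n : ℂ) ^ y ≠ 0 := cpow_ne_zero_iff.2 (Or.inl hn')
  rw [GammaSeq_eq_div_ascPochhammer, GammaSeq_eq_div_ascPochhammer, div_div_div_eq,
    cpow_sub _ _ hn']
  field_simp

-- Also true at a pole `-m`: there `Γ(-m) = 0`, and `GammaSeq (-m) n = 0` once `n ≥ m`.
theorem tendsto_GammaSeq_inv (s : ℂ) :
    Tendsto (fun n ↦ (GammaSeq s n)⁻¹) atTop (𝓝 (Gamma s)⁻¹) := by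
  by_cases hs : Gamma s = 0
  · obtain ⟨m, rfl⟩ := (Gamma_eq_zero_iff s).1 hs
    rw [hs, inv_zero]
    refine tendsto_const_nhds.congr' ?_
    filter_upwards [eventually_ge_atTop m] with n hn
    rw [GammaSeq_eq_div_ascPochhammer, ascPochhammer_eval_neg_coe_nat_of_lt (by omega), div_zero,
      inv_zero]
  · exact (GammaSeq_tendsto_Gamma s).inv₀ hs

theorem tendsto_GammaSeq_div_GammaSeq (x y : ℂ) :
    Tendsto (fun n ↦ GammaSeq x n / GammaSeq y n) atTop (𝓝 (Gamma x / Gamma y)) :=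
  (GammaSeq_tendsto_Gamma x).mul (tendsto_GammaSeq_inv y)

theorem tendsto_natCast_cpow_neg_atTop {s : ℂ} (hs : 0 < s.re) :
    Tendsto (fun n : ℕ ↦ (n : ℂ) ^ (-s)) atTop (𝓝 0) := by
  rw [tendsto_zero_iff_norm_tendsto_zero]
  refine ((tendsto_rpow_neg_atTop hs).comp tendsto_natCast_atTop_atTop).congr' ?_
  filter_upwards [eventually_gt_atTop 0] with n hn
  simp [norm_natCast_cpow_of_pos hn]

end Complex

theorem summable_of_tendsto_mul_succ_mul_cpow {f : ℕ → ℂ} {s L : ℂ} (hs : 0 < s.re)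
    (hf : Tendsto (fun n : ℕ ↦ f n * (n + 1) * (n : ℂ) ^ s) atTop (𝓝 L)) : Summable f := by
  obtain ⟨M, hM⟩ := hf.norm.isBoundedUnder_le
  refine .of_norm_bounded_eventually_nat
    ((Real.summable_nat_rpow.2 (by linarith : -(1 + s.re) < -1)).mul_left M) ?_
  filter_upwards [hM, eventually_gt_atTop 0] with n hfn hn
  have hn' : (0 : ℝ) < n := Nat.cast_pos.2 hn
  have hnorm : ‖f n * (n + 1) * (n : ℂ) ^ s‖ = ‖f n‖ * (n + 1) * (n : ℝ) ^ s.re := by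
    rw [norm_mul, norm_mul, norm_natCast_cpow_of_pos hn, ← Nat.cast_succ, Complex.norm_natCast,
      Nat.cast_succ]
  have hpow : (n : ℝ) ^ (1 + s.re) ≤ (n + 1) * (n : ℝ) ^ s.re := by
    rw [Real.rpow_add hn', Real.rpow_one]
    gcongr
    linarith
  rw [Real.rpow_neg hn'.le, ← div_eq_mul_inv, le_div_iff₀ (by positivity)]
  calc ‖f n‖ * (n : ℝ) ^ (1 + s.re) ≤ ‖f n‖ * (n + 1) * (n : ℝ) ^ s.re := by
        rw [mul_assoc]; gcongr
    _ ≤ M := hnorm ▸ hfn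

section Hypergeometric

variable {a b c : ℂ}

theorem F21term_one_zero (a b c : ℂ) : F21term a b c 1 0 = 1 := by
  simp [F21term]

theorem norm_F21term_one (a b c : ℂ) (k : ℕ) :
    ‖F21term a b c 1 k‖ = ‖(ascPochhammer ℂ k).eval a * (ascPochhammer ℂ k).eval b‖ /
      (‖(ascPochhammer ℂ k).eval c‖ * k.factorial) := by
  simp only [F21term, one_pow, mul_one, norm_div, norm_mul, Complex.norm_natCast]

theorem F21term_one_succ_mul (hc : ∀ m : ℕ, c ≠ -m) (k : ℕ) :
    F21term a b c 1 (k + 1) * ((c + k) * (k + 1)) = F21term a b c 1 k * ((a + k) * (b + k)) := by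
  have hck : c + k ≠ 0 := by simpa using add_natCast_ne_neg_natCast hc k 0
  have hP := ascPochhammer_eval_ne_zero hc k
  have hfac : (k.factorial : ℂ) ≠ 0 := Nat.cast_ne_zero.2 k.factorial_ne_zero
  simp only [F21term, one_pow, mul_one, ascPochhammer_succ_eval, Nat.factorial_succ, Nat.cast_mul,
    Nat.cast_succ]
  field_simp

theorem F21term_one_add_one_mul (hc : ∀ m : ℕ, c ≠ -m) (k : ℕ) :
    F21term a b (c + 1) 1 k * (c + k) = c * F21term a b c 1 k := by
  have hP := ascPochhammer_eval_ne_zero hc k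
  have hP₁ := ascPochhammer_eval_ne_zero (by simpa using add_natCast_ne_neg_natCast hc 1) k
  have hfac : (k.factorial : ℂ) ≠ 0 := Nat.cast_ne_zero.2 k.factorial_ne_zero
  have hrec : c * (ascPochhammer ℂ k).eval (c + 1) = (ascPochhammer ℂ k).eval c * (c + k) := by
    rw [← ascPochhammer_eval_succ_left, ascPochhammer_succ_eval]
  simp only [F21term, one_pow, mul_one]
  field_simp
  linear_combination -(ascPochhammer ℂ k).eval a * (ascPochhammer ℂ k).eval b * hrec

theorem F21term_one_telescope (hc : ∀ m : ℕ, c ≠ -m) (k : ℕ) :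
    c * (c - a - b) * F21term a b c 1 k - (c - a) * (c - b) * F21term a b (c + 1) 1 k =
      c * (k * F21term a b c 1 k - (k + 1) * F21term a b c 1 (k + 1)) := by
  have hck : c + k ≠ 0 := by simpa using add_natCast_ne_neg_natCast hc k 0
  refine mul_left_cancel₀ hck ?_
  linear_combination (-(c - a) * (c - b)) * F21term_one_add_one_mul (a := a) (b := b) hc k +
    c * F21term_one_succ_mul (a := a) (b := b) hc k

theorem tendsto_F21term_one_mul_cpow (hc : ∀ m : ℕ, c ≠ -m) :
    Tendsto (fun n : ℕ ↦ F21term a b c 1 (n + 1) * (n + 1) * (n : ℂ) ^ (c - a - b)) atTop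
      (𝓝 (Gamma c / (Gamma a * Gamma b))) := by
  rw [div_mul_eq_div_div, div_eq_mul_inv (Gamma c / Gamma a)]
  refine ((tendsto_GammaSeq_div_GammaSeq c a).mul (tendsto_GammaSeq_inv b)).congr' ?_
  filter_upwards [eventually_ne_atTop 0] with n hn
  have hn' : (n : ℂ) ≠ 0 := Nat.cast_ne_zero.2 hn
  have hb : (n : ℂ) ^ b ≠ 0 := cpow_ne_zero_iff.2 (Or.inl hn')
  have hfac : (n.factorial : ℂ) ≠ 0 := Nat.cast_ne_zero.2 n.factorial_ne_zero
  have hP := ascPochhammer_eval_ne_zero hc (n + 1)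
  have hpow : (n : ℂ) ^ (c - a) = (n : ℂ) ^ (c - a - b) * (n : ℂ) ^ b := by
    rw [← cpow_add _ _ hn', sub_add_cancel]
  rw [GammaSeq_div_GammaSeq c a hn, GammaSeq_eq_div_ascPochhammer, inv_div, hpow]
  simp only [F21term, one_pow, mul_one, Nat.factorial_succ, Nat.cast_mul, Nat.cast_succ]
  field_simp

theorem summable_F21term_one (h : 0 < (c - a - b).re) (hc : ∀ m : ℕ, c ≠ -m) :
    Summable (F21term a b c 1) :=
  (summable_nat_add_iff 1).1 <|
    summable_of_tendsto_mul_succ_mul_cpow h (tendsto_F21term_one_mul_cpow hc)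

theorem tendsto_natCast_mul_F21term_one (h : 0 < (c - a - b).re) (hc : ∀ m : ℕ, c ≠ -m) :
    Tendsto (fun n : ℕ ↦ (n : ℂ) * F21term a b c 1 n) atTop (𝓝 0) := by
  rw [← tendsto_add_atTop_iff_nat 1]
  have := (tendsto_F21term_one_mul_cpow (a := a) (b := b) hc).mul (tendsto_natCast_cpow_neg_atTop h)
  rw [mul_zero] at this
  refine this.congr' ?_
  filter_upwards [eventually_ne_atTop 0] with n hn
  rw [mul_assoc, ← cpow_add _ _ (Nat.cast_ne_zero.2 hn), add_neg_cancel, cpow_zero]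
  push_cast
  ring

theorem F21_one_contiguous (h : 0 < (c - a - b).re) (hc : ∀ m : ℕ, c ≠ -m) :
    c * (c - a - b) * F21 a b c 1 = (c - a) * (c - b) * F21 a b (c + 1) 1 := by
  have h₁ : 0 < (c + 1 - a - b).re := by
    rw [show c + 1 - a - b = c - a - b + 1 by ring, add_re, one_re]
    linarith
  have hc₁ : ∀ m : ℕ, c + 1 ≠ -m := by simpa using add_natCast_ne_neg_natCast hc 1
  have hsum := ((summable_F21term_one h hc).hasSum.mul_left (c * (c - a - b))).sub
    ((summable_F21term_one h₁ hc₁).hasSum.mul_left ((c - a) * (c - b)))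
  have hzero : HasSum (fun k ↦ c * (c - a - b) * F21term a b c 1 k -
      (c - a) * (c - b) * F21term a b (c + 1) 1 k) 0 := by
    rw [hsum.summable.hasSum_iff_tendsto_nat]
    have hpartial (n : ℕ) : ∑ i ∈ range n, ((i : ℂ) * F21term a b c 1 i -
        (i + 1) * F21term a b c 1 (i + 1)) = -(n * F21term a b c 1 n) := by
      simpa using sum_range_sub' (fun i : ℕ ↦ (i : ℂ) * F21term a b c 1 i) n
    simp_rw [F21term_one_telescope hc, ← mul_sum, hpartial]
    simpa using (tendsto_natCast_mul_F21term_one h hc).neg.const_mul c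
  exact sub_eq_zero.1 (hsum.unique hzero)

theorem F21_one_mul_ascPochhammer (h : 0 < (c - a - b).re) (hc : ∀ m : ℕ, c ≠ -m) (n : ℕ) :
    F21 a b c 1 * ((ascPochhammer ℂ n).eval c * (ascPochhammer ℂ n).eval (c - a - b)) =
      (ascPochhammer ℂ n).eval (c - a) * (ascPochhammer ℂ n).eval (c - b) * F21 a b (c + n) 1 := by
  induction n with
  | zero => simp
  | succ n ih =>
    have hn : 0 < (c + n - a - b).re := by
      rw [show c + n - a - b = c - a - b + n by ring, add_re, natCast_re]
      positivity
    have hcont := F21_one_contiguous hn (add_natCast_ne_neg_natCast hc n)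
    simp only [ascPochhammer_succ_eval, Nat.cast_succ, ← add_assoc]
    linear_combination (c + n) * (c - a - b + n) * ih +
      (ascPochhammer ℂ n).eval (c - a) * (ascPochhammer ℂ n).eval (c - b) * hcont

theorem tendsto_F21_add_natCast_one (a b c : ℂ) :
    Tendsto (fun n : ℕ ↦ F21 a b (c + n) 1) atTop (𝓝 1) := by
  obtain ⟨N, hN⟩ := exists_nat_gt (max (-c.re) (-(c - a - b).re))
  have hcN : 0 < (c + N).re := by
    rw [add_re, natCast_re]; linarith [le_max_left (-c.re) (-(c - a - b).re)]
  have hsN : 0 < (c + N - a - b).re := by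
    rw [show c + N - a - b = c - a - b + N by ring, add_re, natCast_re]
    linarith [le_max_right (-c.re) (-(c - a - b).re)]
  have hlim (k : ℕ) :
      Tendsto (fun n : ℕ ↦ F21term a b (c + n) 1 k) atTop (𝓝 (if k = 0 then 1 else 0)) := by
    rcases k with _ | k
    · simp [F21term_one_zero]
    rw [if_neg k.succ_ne_zero, tendsto_zero_iff_norm_tendsto_zero]
    simp_rw [norm_F21term_one]
    refine tendsto_const_nhds.div_atTop (Tendsto.atTop_mul_const (by positivity) ?_)
    refine Polynomial.tendsto_norm_atTop _ ?_ ?_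
    · rw [degree_eq_natDegree (monic_ascPochhammer ℂ _).ne_zero, ascPochhammer_natDegree]
      exact_mod_cast k.succ_pos
    · refine tendsto_atTop_mono (fun n ↦ re_le_norm (c + n)) ?_
      simpa using tendsto_atTop_add_const_left _ c.re tendsto_natCast_atTop_atTop
  have hdom : ∀ᶠ n : ℕ in atTop, ∀ k, ‖F21term a b (c + n) 1 k‖ ≤ ‖F21term a b (c + N) 1 k‖ := by
    filter_upwards [eventually_ge_atTop N] with n hn k
    obtain ⟨m, rfl⟩ := Nat.exists_eq_add_of_le hn
    have hP := ascPochhammer_eval_ne_zero (ne_neg_natCast_of_re_pos hcN) k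
    rw [norm_F21term_one, norm_F21term_one, Nat.cast_add, ← add_assoc]
    gcongr
    exact norm_ascPochhammer_eval_le_add_natCast hcN.le m k
  have := tendsto_tsum_of_dominated_convergence
    (summable_F21term_one hsN (ne_neg_natCast_of_re_pos hcN)).norm hlim hdom
  rwa [tsum_ite_eq] at this

theorem F21_one_eq_GammaSeq_ratio_mul (h : 0 < (c - a - b).re) (hc : ∀ m : ℕ, c ≠ -m) {n : ℕ}
    (hn : n ≠ 0) :
    F21 a b c 1 = GammaSeq c n / GammaSeq (c - a) n *
      (GammaSeq (c - a - b) n / GammaSeq (c - b) n) * F21 a b (c + (n + 1 : ℕ)) 1 := by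
  have hn' : (n : ℂ) ≠ 0 := Nat.cast_ne_zero.2 hn
  have hP := ascPochhammer_eval_ne_zero hc (n + 1)
  have hPs := ascPochhammer_eval_ne_zero (ne_neg_natCast_of_re_pos h) (n + 1)
  have hpow : (n : ℂ) ^ (c - (c - a)) * (n : ℂ) ^ (c - a - b - (c - b)) = 1 := by
    rw [← cpow_add _ _ hn']
    ring_nf
    exact cpow_zero _
  rw [GammaSeq_div_GammaSeq _ _ hn, GammaSeq_div_GammaSeq _ _ hn]
  field_simp
  linear_combination F21_one_mul_ascPochhammer h hc (n + 1) -
    (ascPochhammer ℂ (n + 1)).eval (c - a) * (ascPochhammer ℂ (n + 1)).eval (c - b) *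
      F21 a b (c + (n + 1 : ℕ)) 1 * hpow

end Hypergeometric

/-- Gauss summation formula: for Re(c-a-b) > 0 and c not a nonpositive integer,
₂F₁(a,b;c;1) = Γ(c)Γ(c-a-b)/(Γ(c-a)Γ(c-b)). -/
theorem gauss_summation (a b c : ℂ) (h : 0 < (c - a - b).re)
    (hc : ∀ n : ℕ, c ≠ -n) :
    F21 a b c 1 =
      Complex.Gamma c * Complex.Gamma (c - a - b) /
        (Complex.Gamma (c - a) * Complex.Gamma (c - b)) := by
  have hlim := ((tendsto_GammaSeq_div_GammaSeq c (c - a)).mul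
    (tendsto_GammaSeq_div_GammaSeq (c - a - b) (c - b))).mul
    ((tendsto_F21_add_natCast_one a b c).comp (tendsto_add_atTop_nat 1))
  rw [mul_one, div_mul_div_comm] at hlim
  refine tendsto_nhds_unique tendsto_const_nhds (hlim.congr' ?_)
  filter_upwards [eventually_ne_atTop 0] with n hn
  exact (F21_one_eq_GammaSeq_ratio_mul h hc hn).symm
end

section
/- For Re(b_n) > Re(a_{n+1}) > 0, the Euler integral representation holds: ₂F₁(a,b;c;x) = (1/B(b, c-b)) ∫₀¹ y^{b-1}(1-y)^{c-b-1}(1-xy)^{-a} dy, valid for x ∈ [0,1). -/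
/-!
For `0 ≤ y ≤ 1` the binomial series `(1 - xy)^{-a} = ∑ (a)_k / k! (xy)^k` is dominated termwise
by `|(a)_k / k!| x^k`, a summable sequence since `x < 1`. Hence the series may be integrated
termwise against the Beta weight `y^{b-1}(1-y)^{c-b-1}`, whose `k`-th moment is
`B(b+k, c-b) = (b)_k / (c)_k · B(b, c-b)` by `B(u,v) = Γ(u)Γ(v)/Γ(u+v)`. The `k`-th integrated
term is therefore the `k`-th term of ₂F₁(a,b;c;x) times `B(b, c-b)`.
-/

open Complex

open MeasureTheory Set
open scoped Nat

theorem Ring.choose_add_sub_one_eq_ascPochhammer_div {R : Type*} [Field R] [CharZero R]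
    (a : R) (n : ℕ) :
    Ring.choose (a + n - 1) n = (ascPochhammer R n).eval a / n ! := by
  rw [Ring.choose_eq_smul, Polynomial.descPochhammer_smeval_eq_ascPochhammer,
    Polynomial.ascPochhammer_smeval_eq_eval, smul_eq_mul, inv_mul_eq_div]
  ring_nf

namespace Complex

theorem hasSum_ascPochhammer_div_factorial_mul_pow (a : ℂ) {z : ℂ} (hz : ‖z‖ < 1) :
    HasSum (fun k : ℕ => (ascPochhammer ℂ k).eval a / k ! * z ^ k) ((1 - z) ^ (-a)) := by
  have h := (one_div_one_sub_cpow_hasFPowerSeriesOnBall_zero a).hasSum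
    (y := z) (by simpa [← ofReal_norm] using hz)
  simpa [FormalMultilinearSeries.ofScalars_apply_eq, Ring.choose_add_sub_one_eq_ascPochhammer_div,
    cpow_neg, mul_comm] using h

theorem summable_norm_ascPochhammer_div_factorial_mul_pow (a : ℂ) {z : ℂ} (hz : ‖z‖ < 1) :
    Summable (fun k : ℕ => ‖(ascPochhammer ℂ k).eval a / k ! * z ^ k‖) := by
  have h := one_div_one_sub_cpow_hasFPowerSeriesOnBall_zero a
  have := FormalMultilinearSeries.summable_norm_apply _ (x := z)
    (lt_of_lt_of_le (by simpa [← ofReal_norm] using hz) h.r_le)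
  simpa [FormalMultilinearSeries.ofScalars_apply_eq, Ring.choose_add_sub_one_eq_ascPochhammer_div,
    mul_comm] using this

theorem betaIntegral_ne_zero {u v : ℂ} (hu : 0 < u.re) (hv : 0 < v.re) :
    betaIntegral u v ≠ 0 := by
  rw [betaIntegral_eq_Gamma_mul_div _ _ hu hv]
  exact div_ne_zero (mul_ne_zero (Gamma_ne_zero_of_re_pos hu) (Gamma_ne_zero_of_re_pos hv))
    (Gamma_ne_zero_of_re_pos (by simp only [add_re]; positivity))

theorem betaIntegral_add_nat_left {u v : ℂ} (hu : 0 < u.re) (hv : 0 < v.re) (k : ℕ) :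
    betaIntegral (u + k) v =
      (ascPochhammer ℂ k).eval u / (ascPochhammer ℂ k).eval (u + v) * betaIntegral u v := by
  have ne_neg_nat {s : ℂ} (hs : 0 < s.re) (m : ℕ) : s ≠ -m := fun h => by
    have := congrArg re h
    simp only [neg_re, natCast_re] at this
    linarith [(m.cast_nonneg : (0 : ℝ) ≤ m)]
  have huk : 0 < (u + k).re := by simp only [add_re, natCast_re]; positivity
  have huv : 0 < (u + v).re := by simp only [add_re]; positivity
  have huvk : 0 < (u + v + k).re := by simp only [add_re, natCast_re]; positivity
  rw [betaIntegral_eq_Gamma_mul_div _ _ huk hv, betaIntegral_eq_Gamma_mul_div _ _ hu hv,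
    ← Gamma_add_nat_div_Gamma_eq u (ne_neg_nat hu),
    ← Gamma_add_nat_div_Gamma_eq _ (ne_neg_nat huv), add_right_comm u k v]
  have := Gamma_ne_zero_of_re_pos hu
  have := Gamma_ne_zero_of_re_pos huv
  have := Gamma_ne_zero_of_re_pos huvk
  field_simp

end Complex

theorem integral_Ioc_cpow_mul_one_sub_cpow_mul_pow (u v z : ℂ) (k : ℕ) :
    ∫ y in Ioc (0 : ℝ) 1, (y : ℂ) ^ (u - 1) * (1 - (y : ℂ)) ^ (v - 1) * (z * y) ^ k =
      z ^ k * betaIntegral (u + k) v := by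
  rw [betaIntegral, intervalIntegral.integral_of_le zero_le_one, ← integral_const_mul]
  refine setIntegral_congr_fun measurableSet_Ioc fun y hy => ?_
  have hy0 : (y : ℂ) ≠ 0 := ofReal_ne_zero.2 hy.1.ne'
  rw [add_sub_right_comm, cpow_add _ _ hy0, cpow_natCast]
  ring

theorem hasSum_integral_mul_ascPochhammer_div_factorial_mul_pow {α : Type*} [MeasurableSpace α]
    {μ : Measure α} (a : ℂ) {w g : α → ℂ} {r : ℝ} (hw : Integrable w μ)
    (hg : AEStronglyMeasurable g μ) (hgr : ∀ᵐ y ∂μ, ‖g y‖ ≤ r) (hr0 : 0 ≤ r) (hr1 : r < 1) :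
    HasSum (fun k : ℕ => ∫ y, w y * ((ascPochhammer ℂ k).eval a / k ! * g y ^ k) ∂μ)
      (∫ y, w y * (1 - g y) ^ (-a) ∂μ) := by
  have hr : ‖(r : ℂ)‖ = r := by simp [hr0]
  set C : ℕ → ℝ := fun k => ‖(ascPochhammer ℂ k).eval a / k ! * (r : ℂ) ^ k‖
  have hC : Summable C := summable_norm_ascPochhammer_div_factorial_mul_pow a (by rwa [hr])
  refine hasSum_integral_of_dominated_convergence (fun k y => C k * ‖w y‖)
    (fun k => hw.aestronglyMeasurable.mul (aestronglyMeasurable_const.mul (hg.pow k)))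
    (fun k => ?_) (ae_of_all _ fun y => hC.mul_right _) ?_ ?_
  · filter_upwards [hgr] with y hy
    rw [norm_mul, mul_comm]
    simp only [C, norm_mul, norm_pow, hr]
    gcongr
  · simpa [tsum_mul_right] using hw.norm.const_mul (∑' k, C k)
  · filter_upwards [hgr] with y hy
    exact (hasSum_ascPochhammer_div_factorial_mul_pow a (hy.trans_lt hr1)).mul_left (w y)

/-- Euler integral representation: for Re(c) > Re(b) > 0 and 0 ≤ x < 1,
₂F₁(a,b;c;x) = (1/B(b,c-b)) ∫₀¹ y^{b-1}(1-y)^{c-b-1}(1-xy)^{-a} dy. -/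
theorem euler_integral_repr (a b c : ℂ) (hb : 0 < b.re) (hbc : b.re < c.re)
    (x : ℝ) (hx0 : 0 ≤ x) (hx1 : x < 1) :
    F21 a b c x =
      (1 / Complex.betaIntegral b (c - b)) *
        ∫ y in (0:ℝ)..1,
          (y : ℂ) ^ (b - 1) * (1 - (y : ℂ)) ^ (c - b - 1) * (1 - (x : ℂ) * y) ^ (-a) := by
  have hcb : 0 < (c - b).re := by simpa using hbc
  have hw : IntegrableOn (fun y : ℝ => (y : ℂ) ^ (b - 1) * (1 - (y : ℂ)) ^ (c - b - 1))
      (Ioc 0 1) :=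
    (intervalIntegrable_iff_integrableOn_Ioc_of_le zero_le_one).1 (betaIntegral_convergent hb hcb)
  have hxy : ∀ᵐ y : ℝ ∂(volume.restrict (Ioc (0 : ℝ) 1)), ‖(x : ℂ) * y‖ ≤ x := by
    filter_upwards [ae_restrict_mem measurableSet_Ioc] with y hy
    simpa [abs_of_nonneg hx0, abs_of_pos hy.1] using mul_le_of_le_one_right hx0 hy.2
  have hterm (k : ℕ) : ∫ y in Ioc (0 : ℝ) 1, (y : ℂ) ^ (b - 1) * (1 - (y : ℂ)) ^ (c - b - 1) *
      ((ascPochhammer ℂ k).eval a / k ! * (x * y) ^ k) =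
        F21term a b c x k * betaIntegral b (c - b) := by
    simp_rw [mul_left_comm _ ((ascPochhammer ℂ k).eval a / k ! : ℂ)]
    rw [integral_const_mul, integral_Ioc_cpow_mul_one_sub_cpow_mul_pow,
      betaIntegral_add_nat_left hb hcb, add_sub_cancel, F21term]
    ring
  have hsum := hasSum_integral_mul_ascPochhammer_div_factorial_mul_pow a hw
    (by fun_prop : Continuous fun y : ℝ => (x : ℂ) * y).aestronglyMeasurable hxy hx0 hx1
  simp_rw [hterm] at hsum
  rw [F21, intervalIntegral.integral_of_le zero_le_one, ← hsum.tsum_eq, tsum_mul_right,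
    one_div_mul_eq_div, mul_div_cancel_right₀ _ (betaIntegral_ne_zero hb hcb)]
end

section
/- Every nonzero integral ideal I of ℤ[ζ₆] with norm coprime to 6 has a unique generator of the form a + b√(-3) with a, b ∈ ℤ, a ≡ 1 (mod 3), and exactly one of a, b even. -/
open NumberField

noncomputable instance : NumberField (CyclotomicField 6 ℚ) :=
  inferInstance

/-!
`𝓞 ℚ(ζ₆) = ℤ[ζ]` with `ζ ^ 2 = ζ - 1` is a principal ideal domain, so `I = (u + v ζ)`, and
the norm `u ^ 2 + u v + v ^ 2` is prime to `6`. The `ζ`-coordinates of `ζ ^ k (u + v ζ)` for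
`k = 0, 1, 2` are `v`, `u + v`, `u`, of which exactly one is even; an element with even
`ζ`-coordinate is `a + b √-3` with `a ^ 2 + 3 b ^ 2` prime to `6`, so `3 ∤ a`, `a + b` is odd,
and the sign of the generator is fixed by `a ≡ 1 (mod 3)`. Conversely the unit relating two
such generators has norm `p ^ 2 + p q + q ^ 2 = 1`, hence is one of `±1, ±ζ, ±ζ ^ 2`, and only
`1` preserves the normalization.
-/

theorem xor_even_iff_add_emod_two {a b : ℤ} : Xor (Even a) (Even b) ↔ (a + b) % 2 = 1 := by
  rw [xor_iff_not_iff, Int.even_iff, Int.even_iff]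
  omega

-- In coordinates, `(p + q ζ) (u + v ζ) = (p u - q v) + (p v + q u + q v) ζ` and
-- `a + b √-3 = (a - b) + 2 b ζ`.
theorem exists_sq_add_mul_add_sq_eq_one_two_dvd {u v : ℤ} (h : ¬ 2 ∣ u ^ 2 + u * v + v ^ 2) :
    ∃ p q : ℤ, p ^ 2 + p * q + q ^ 2 = 1 ∧ 2 ∣ p * v + q * u + q * v := by
  have huv : ¬ (2 ∣ u ∧ 2 ∣ v) := by
    rintro ⟨⟨m, rfl⟩, ⟨n, rfl⟩⟩
    exact h ⟨2 * (m ^ 2 + m * n + n ^ 2), by ring⟩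
  by_cases hv : 2 ∣ v
  · exact ⟨1, 0, by ring, by simpa using hv⟩
  by_cases hu : 2 ∣ u
  · exact ⟨-1, 1, by ring, by simpa using hu⟩
  · exact ⟨0, 1, by ring, by omega⟩

theorem exists_unit_mul_normalized {u v : ℤ} (h : IsCoprime (u ^ 2 + u * v + v ^ 2) 6) :
    ∃ p q a b : ℤ, p ^ 2 + p * q + q ^ 2 = 1 ∧ p * u - q * v = a - b ∧
      p * v + q * u + q * v = 2 * b ∧ a % 3 = 1 ∧ Xor (Even a) (Even b) := by
  have h2 : ¬ 2 ∣ u ^ 2 + u * v + v ^ 2 := fun h2 => by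
    simpa [Int.isUnit_iff] using h.isUnit_of_dvd' h2 (by norm_num)
  have h3 : ¬ 3 ∣ u ^ 2 + u * v + v ^ 2 := fun h3 => by
    simpa [Int.isUnit_iff] using h.isUnit_of_dvd' h3 (by norm_num)
  obtain ⟨p, q, hpq, b, hb⟩ := exists_sq_add_mul_add_sq_eq_one_two_dvd h2
  set a := p * u - q * v + b
  -- `a ^ 2 + 3 b ^ 2` is the norm of `(p + q ζ) (u + v ζ)`, and `p + q ζ` has norm one
  have hnorm : a ^ 2 + 3 * b ^ 2 = u ^ 2 + u * v + v ^ 2 := by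
    linear_combination -(p * u - q * v + 2 * b + (p * v + q * u + q * v)) * hb
      + (u ^ 2 + u * v + v ^ 2) * hpq
  have ha : ¬ 3 ∣ a := fun ha =>
    h3 (hnorm ▸ (dvd_pow ha two_ne_zero).add (dvd_mul_right 3 _))
  have hab : (a + b) % 2 = 1 := by
    by_contra hab
    obtain ⟨k, hk⟩ : 2 ∣ a + b := by omega
    exact h2 ⟨2 * (k ^ 2 - k * b + b ^ 2), by linear_combination -hnorm + (a + 2 * k - b) * hk⟩
  rcases (by omega : a % 3 = 1 ∨ a % 3 = 2) with ha | ha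
  · exact ⟨p, q, a, b, hpq, by ring, hb, ha, xor_even_iff_add_emod_two.2 hab⟩
  · exact ⟨-p, -q, -a, -b, by linear_combination hpq, by ring, by linear_combination -hb,
      by omega, xor_even_iff_add_emod_two.2 (by omega)⟩

theorem eq_of_unit_mul_normalized {p q a b a' b' : ℤ} (hpq : p ^ 2 + p * q + q ^ 2 = 1)
    (h₁ : p * (a - b) - q * (2 * b) = a' - b')
    (h₂ : p * (2 * b) + q * (a - b) + q * (2 * b) = 2 * b')
    (ha : a % 3 = 1) (hab : Xor (Even a) (Even b)) (ha' : a' % 3 = 1) : a = a' ∧ b = b' := by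
  rw [xor_even_iff_add_emod_two] at hab
  have hp : -1 ≤ p ∧ p ≤ 1 := by constructor <;> nlinarith [sq_nonneg (p + 2 * q)]
  have hq : -1 ≤ q ∧ q ≤ 1 := by constructor <;> nlinarith [sq_nonneg (2 * p + q)]
  obtain ⟨hp₁, hp₂⟩ := hp
  obtain ⟨hq₁, hq₂⟩ := hq
  interval_cases p <;> interval_cases q <;> omega

section EisensteinCoordinates

variable {S : Type*} [CommRing S] {ζ : S}

theorem intCast_add_mul_mul_intCast_add_mul (hζ : ζ ^ 2 = ζ - 1) (p q r s : ℤ) :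
    ((p : S) + q * ζ) * (r + s * ζ) =
      ((p * r - q * s : ℤ) : S) + ((p * s + q * r + q * s : ℤ) : S) * ζ := by
  push_cast
  linear_combination (q : S) * s * hζ

theorem intCast_add_intCast_mul_two_mul_sub_one (a b : ℤ) :
    (a : S) + b * (2 * ζ - 1) = ((a - b : ℤ) : S) + ((2 * b : ℤ) : S) * ζ := by
  push_cast
  ring

theorem isUnit_intCast_add_mul (hζ : ζ ^ 2 = ζ - 1) {p q : ℤ}
    (h : p ^ 2 + p * q + q ^ 2 = 1) : IsUnit ((p : S) + q * ζ) :=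
  IsUnit.of_mul_eq_one (((p + q : ℤ) : S) + ((-q : ℤ) : S) * ζ) <| by
    rw [intCast_add_mul_mul_intCast_add_mul hζ,
      show p * (p + q) - q * -q = 1 by linear_combination h,
      show p * -q + q * (p + q) + q * -q = 0 by ring]
    simp

theorem exists_associated_normalized (hζ : ζ ^ 2 = ζ - 1) {u v : ℤ}
    (h : IsCoprime (u ^ 2 + u * v + v ^ 2) 6) :
    ∃ a b : ℤ, Associated ((u : S) + v * ζ) (a + b * (2 * ζ - 1)) ∧
      a % 3 = 1 ∧ Xor (Even a) (Even b) := by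
  obtain ⟨p, q, a, b, hpq, h₁, h₂, ha, hab⟩ := exists_unit_mul_normalized h
  refine ⟨a, b, ⟨(isUnit_intCast_add_mul hζ hpq).unit, ?_⟩, ha, hab⟩
  rw [IsUnit.unit_spec, mul_comm, intCast_add_mul_mul_intCast_add_mul hζ,
    intCast_add_intCast_mul_two_mul_sub_one, h₁, h₂]

variable {b : Module.Basis (Fin 2) ℤ S} (hb : ⇑b = ![1, ζ])
include hb

theorem repr_intCast_add_mul (u v : ℤ) :
    b.repr ((u : S) + v * ζ) = Finsupp.single 0 u + Finsupp.single 1 v := by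
  have : (u : S) + v * ζ = u • b 0 + v • b 1 := by simp [hb, zsmul_eq_mul]
  rw [this, map_add, map_zsmul, map_zsmul, b.repr_self, b.repr_self, Finsupp.smul_single_one,
    Finsupp.smul_single_one]

theorem repr_intCast_add_mul_apply_zero (u v : ℤ) : b.repr ((u : S) + v * ζ) 0 = u := by
  simp [repr_intCast_add_mul hb]

theorem repr_intCast_add_mul_apply_one (u v : ℤ) : b.repr ((u : S) + v * ζ) 1 = v := by
  simp [repr_intCast_add_mul hb]

theorem exists_eq_intCast_add_mul (x : S) : ∃ u v : ℤ, x = u + v * ζ :=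
  ⟨b.repr x 0, b.repr x 1, by
    conv_lhs => rw [← b.sum_repr x]
    simp [Fin.sum_univ_two, hb, zsmul_eq_mul]⟩

theorem intCast_add_mul_inj {u v u' v' : ℤ} (h : (u : S) + v * ζ = u' + v' * ζ) :
    u = u' ∧ v = v' :=
  ⟨by rw [← repr_intCast_add_mul_apply_zero hb u v, h, repr_intCast_add_mul_apply_zero hb],
    by rw [← repr_intCast_add_mul_apply_one hb u v, h, repr_intCast_add_mul_apply_one hb]⟩

theorem norm_intCast_add_mul (hζ : ζ ^ 2 = ζ - 1) (u v : ℤ) :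
    Algebra.norm ℤ ((u : S) + v * ζ) = u ^ 2 + u * v + v ^ 2 := by
  have hmulζ : ((u : S) + v * ζ) * ζ = ((-v : ℤ) : S) + ((u + v : ℤ) : S) * ζ := by
    push_cast
    linear_combination (v : S) * hζ
  rw [Algebra.norm_eq_matrix_det b, Matrix.det_fin_two]
  simp only [Algebra.leftMulMatrix_eq_repr_mul, hb, Matrix.cons_val_zero, Matrix.cons_val_one,
    mul_one, hmulζ, repr_intCast_add_mul_apply_zero hb, repr_intCast_add_mul_apply_one hb]
  ring

theorem sq_add_mul_add_sq_eq_one_of_isUnit (hζ : ζ ^ 2 = ζ - 1) {p q : ℤ}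
    (h : IsUnit ((p : S) + q * ζ)) : p ^ 2 + p * q + q ^ 2 = 1 := by
  have h := h.map (Algebra.norm ℤ)
  rw [norm_intCast_add_mul hb hζ, Int.isUnit_iff] at h
  rcases h with h | h
  · exact h
  · nlinarith [sq_nonneg (p + q), sq_nonneg p, sq_nonneg q]

theorem eq_of_associated_normalized (hζ : ζ ^ 2 = ζ - 1) {a b a' b' : ℤ}
    (h : Associated ((a : S) + b * (2 * ζ - 1)) (a' + b' * (2 * ζ - 1)))
    (ha : a % 3 = 1) (hab : Xor (Even a) (Even b)) (ha' : a' % 3 = 1) : a = a' ∧ b = b' := by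
  obtain ⟨w, hw⟩ := h
  obtain ⟨p, q, hpq⟩ := exists_eq_intCast_add_mul hb (w : S)
  have hunit := sq_add_mul_add_sq_eq_one_of_isUnit hb hζ (hpq ▸ w.isUnit)
  rw [intCast_add_intCast_mul_two_mul_sub_one, intCast_add_intCast_mul_two_mul_sub_one, hpq,
    mul_comm, intCast_add_mul_mul_intCast_add_mul hζ] at hw
  obtain ⟨h₁, h₂⟩ := intCast_add_mul_inj hb hw
  exact eq_of_unit_mul_normalized hunit h₁ h₂ ha hab ha'

end EisensteinCoordinates

theorem IsPrimitiveRoot.sq_eq_sub_one_of_six {R : Type*} [CommRing R] [IsDomain R] {ζ : R}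
    (hζ : IsPrimitiveRoot ζ 6) : ζ ^ 2 = ζ - 1 := by
  have h := hζ.isRoot_cyclotomic (by norm_num)
  rw [Polynomial.cyclotomic_six, Polynomial.IsRoot] at h
  simp only [Polynomial.eval_add, Polynomial.eval_sub, Polynomial.eval_pow, Polynomial.eval_X,
    Polynomial.eval_one] at h
  linear_combination h

theorem IsCyclotomicExtension.three_of_six {A B : Type*} [CommRing A] [CommRing B] [Algebra A B]
    [IsDomain B] [IsCyclotomicExtension {6} A B] : IsCyclotomicExtension {3} A B := by
  obtain ⟨ζ, hζ⟩ := exists_isPrimitiveRoot A (B := B) (Set.mem_singleton 6) (by norm_num)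
  rw [iff_singleton]
  refine ⟨⟨ζ ^ 2, hζ.pow (by norm_num) (by norm_num)⟩, fun x => ?_⟩
  have hx : x ∈ Algebra.adjoin A {ζ} := by
    rw [adjoin_primitive_root_eq_top hζ]
    trivial
  refine Algebra.adjoin_le ?_ hx
  intro y hy
  rw [Set.mem_singleton_iff.mp hy,
    show ζ = -ζ ^ 4 by linear_combination (ζ ^ 2 + ζ) * hζ.sq_eq_sub_one_of_six]
  refine Subalgebra.neg_mem _ (Algebra.subset_adjoin ?_)
  show (ζ ^ 4) ^ 3 = 1
  rw [← pow_mul, show 4 * 3 = 6 * 2 by rfl, pow_mul, hζ.pow_eq_one, one_pow]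

theorem IsCyclotomicExtension.Rat.six_pid (K : Type*) [Field K] [NumberField K]
    [IsCyclotomicExtension {6} ℚ K] : IsPrincipalIdealRing (𝓞 K) :=
  have := three_of_six (A := ℚ) (B := K)
  three_pid K

theorem IsPrimitiveRoot.exists_basis_ringOfIntegers_eq_one_zeta {K : Type*} [Field K]
    [NumberField K] [IsCyclotomicExtension {6} ℚ K] {ζ : 𝓞 K} (hζ : IsPrimitiveRoot ζ 6) :
    ∃ b : Module.Basis (Fin 2) ℤ (𝓞 K), ⇑b = ![1, ζ] := by
  have hζK : IsPrimitiveRoot (ζ : K) 6 := hζ.map_of_injective RingOfIntegers.coe_injective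
  have hdim : hζK.integralPowerBasis.dim = 2 := by
    rw [hζK.integralPowerBasis_dim]
    rfl
  refine ⟨hζK.integralPowerBasis.basis.reindex (finCongr hdim), ?_⟩
  ext i
  fin_cases i <;> simp [Module.Basis.reindex_apply, PowerBasis.coe_basis]

theorem unique_generator_coprime_six_general
    (ζ : 𝓞 (CyclotomicField 6 ℚ)) (hζ : IsPrimitiveRoot ζ 6)
    (I : Ideal (𝓞 (CyclotomicField 6 ℚ)))
    (hcop : Nat.Coprime (Ideal.absNorm I) 6) :
    ∃! ab : ℤ × ℤ,
      I = Ideal.span {(ab.1 : 𝓞 (CyclotomicField 6 ℚ)) +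
            (ab.2 : 𝓞 (CyclotomicField 6 ℚ)) * (2 * ζ - 1)} ∧
      ab.1 % 3 = 1 ∧ Xor' (Even ab.1) (Even ab.2) := by
  have : IsCyclotomicExtension {6} ℚ (CyclotomicField 6 ℚ) :=
    CyclotomicField.isCyclotomicExtension 6 ℚ
  have := IsCyclotomicExtension.Rat.six_pid (CyclotomicField 6 ℚ)
  obtain ⟨B, hB⟩ := hζ.exists_basis_ringOfIntegers_eq_one_zeta
  have hζ₂ := hζ.sq_eq_sub_one_of_six
  obtain ⟨x, rfl⟩ : ∃ x, I = Ideal.span {x} :=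
    ⟨_, (Ideal.span_singleton_generator I).symm⟩
  obtain ⟨u, v, rfl⟩ := exists_eq_intCast_add_mul hB x
  rw [Ideal.absNorm_span_singleton, norm_intCast_add_mul hB hζ₂] at hcop
  obtain ⟨a, b, hassoc, ha, hab⟩ :=
    exists_associated_normalized hζ₂ (Int.isCoprime_iff_gcd_eq_one.2 hcop)
  refine ⟨(a, b), ⟨Ideal.span_singleton_eq_span_singleton.2 hassoc, ha, hab⟩, ?_⟩
  rintro ⟨a', b'⟩ ⟨hI, ha', -⟩
  have hassoc' := Ideal.span_singleton_eq_span_singleton.1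
    ((Ideal.span_singleton_eq_span_singleton.2 hassoc).symm.trans hI)
  obtain ⟨rfl, rfl⟩ := eq_of_associated_normalized hB hζ₂ hassoc' ha hab ha'
  rfl

/-- Every nonzero integral ideal of ℤ[ζ₆] (the ring of integers of ℚ(ζ₆) = ℚ(√-3))
with norm coprime to 6 has a unique generator of the form a + b√(-3), with a, b ∈ ℤ,
a ≡ 1 (mod 3) and exactly one of a, b even.  Here √(-3) = 2ζ₆ - 1. -/
theorem unique_generator_coprime_six
    (ζ : 𝓞 (CyclotomicField 6 ℚ)) (hζ : IsPrimitiveRoot ζ 6)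
    (I : Ideal (𝓞 (CyclotomicField 6 ℚ))) (hI : I ≠ ⊥)
    (hcop : Nat.Coprime (Ideal.absNorm I) 6) :
    ∃! ab : ℤ × ℤ,
      I = Ideal.span {(ab.1 : 𝓞 (CyclotomicField 6 ℚ)) +
            (ab.2 : 𝓞 (CyclotomicField 6 ℚ)) * (2 * ζ - 1)} ∧
      ab.1 % 3 = 1 ∧ Xor' (Even ab.1) (Even ab.2) :=
  unique_generator_coprime_six_general ζ hζ I hcop
end

section
/- Every nonzero integral ideal of ℤ[ζ₆] with norm coprime to 3 has a generator of the form a + b√(-3) with a, b ∈ ℤ and a ≡ 1 (mod 3). -/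
/-!
Since `ζ ^ 2 = ζ - 1`, the ring `ℤ[ζ₆]` is a principal ideal domain with `ℤ`-basis `1, ζ`, and
`a + b√-3 = (a - b) + 2bζ`, so the elements `a + b√-3` are exactly the `p + qζ` with `q` even.
Multiplying a generator `p + qζ` by one of the units `1, ζ, ζ²` makes `q` even. The resulting
`a + b√-3` has `3 ∤ a`: otherwise `√-3` divides it, and `N(√-3) = 3` would divide the norm of the
ideal. Finally, replacing the generator by its negative gives `a ≡ 1 (mod 3)`.
-/

open NumberField

theorem IsCyclotomicExtension.of_two_mul {A B : Type*} [CommRing A] [CommRing B] [Algebra A B]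
    [IsDomain B] {n : ℕ} (hn : Odd n) (h : IsCyclotomicExtension {2 * n} A B) :
    IsCyclotomicExtension {n} A B := by
  have hpos := hn.pos
  have : NeZero n := ⟨hpos.ne'⟩
  obtain ⟨ζ, hζ⟩ := h.exists_isPrimitiveRoot (Set.mem_singleton _) (by positivity)
  refine (iff_singleton n A B).2 ⟨⟨ζ ^ 2, hζ.pow (by positivity) rfl⟩, fun x ↦ ?_⟩
  refine Algebra.adjoin_le ?_ (h.adjoin_roots x)
  rintro b ⟨_, rfl, -, hb⟩
  rcases mul_self_eq_one_iff.1 (by rw [← pow_add, ← two_mul, hb] : b ^ n * b ^ n = 1) with h1 | h1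
  · exact Algebra.subset_adjoin h1
  · have : (-b) ^ n = 1 := by rw [hn.neg_pow, h1, neg_neg]
    simpa using neg_mem (Algebra.subset_adjoin this : -b ∈ Algebra.adjoin A {b : B | b ^ n = 1})

section SqEqSubOne

variable {R : Type*} [CommRing R] {ζ : R}

theorem isUnit_of_sq_eq_sub_one (h : ζ ^ 2 = ζ - 1) : IsUnit ζ :=
  IsUnit.of_mul_eq_one (1 - ζ) (by linear_combination -h)

theorem two_mul_sub_one_sq_of_sq_eq_sub_one (h : ζ ^ 2 = ζ - 1) : (2 * ζ - 1) ^ 2 = -3 := by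
  linear_combination 4 * h

theorem exists_pow_mul_eq_int_add_int_mul_two_mul_sub_one (h : ζ ^ 2 = ζ - 1) (p q : ℤ) :
    ∃ k : ℕ, ∃ A B : ℤ, ζ ^ k * (p + q * ζ) = A + B * (2 * ζ - 1) := by
  rcases Int.even_or_odd q with ⟨m, rfl⟩ | hq
  · exact ⟨0, p + m, m, by push_cast; ring⟩
  rcases Int.even_or_odd p with ⟨m, rfl⟩ | hp
  · exact ⟨2, -m - q, m, by push_cast; linear_combination (2 * m + q * ζ + q) * h⟩
  · obtain ⟨m, hm⟩ := hp.add_odd hq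
    obtain rfl : p = m + m - q := by omega
    exact ⟨1, m - q, m, by push_cast; linear_combination q * h⟩

theorem two_mul_sub_one_dvd_int_add_int_mul (h : ζ ^ 2 = ζ - 1) {A : ℤ} (hA : 3 ∣ A) (B : ℤ) :
    2 * ζ - 1 ∣ A + B * (2 * ζ - 1) := by
  obtain ⟨k, rfl⟩ := hA
  exact ⟨B - k * (2 * ζ - 1), by
    push_cast; linear_combination (k : R) * two_mul_sub_one_sq_of_sq_eq_sub_one h⟩

end SqEqSubOne

theorem Ideal.exists_span_int_add_int_mul_eq_of_not_dvd {R : Type*} [CommRing R] (δ : R) {A : ℤ}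
    (hA : ¬ 3 ∣ A) (B : ℤ) :
    ∃ a b : ℤ, Ideal.span {(A : R) + B * δ} = Ideal.span {(a : R) + b * δ} ∧ a % 3 = 1 := by
  rcases (by omega : A % 3 = 1 ∨ A % 3 = 2) with h1 | h2
  · exact ⟨A, B, rfl, h1⟩
  · refine ⟨-A, -B, ?_, by omega⟩
    rw [← Ideal.span_singleton_neg]
    push_cast
    ring_nf

namespace IsPrimitiveRoot

theorem sq_eq_sub_one {R : Type*} [CommRing R] [IsDomain R] {ζ : R} (hζ : IsPrimitiveRoot ζ 6) :
    ζ ^ 2 = ζ - 1 := by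
  have := hζ.isRoot_cyclotomic (by norm_num)
  simp only [Polynomial.cyclotomic_six, Polynomial.IsRoot.def, Polynomial.eval_add,
    Polynomial.eval_sub, Polynomial.eval_pow, Polynomial.eval_X, Polynomial.eval_one] at this
  linear_combination this

variable {K : Type*} [Field K] [NumberField K] [IsCyclotomicExtension {6} ℚ K]

theorem integralPowerBasis_dim_eq_two {ζ : K} (hζ : IsPrimitiveRoot ζ 6) :
    hζ.integralPowerBasis.dim = 2 := by
  simp; decide

variable {ζ : 𝓞 K}

theorem exists_int_add_int_mul_eq (hζ : IsPrimitiveRoot ζ 6) (x : 𝓞 K) :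
    ∃ p q : ℤ, x = p + q * ζ := by
  have hζK : IsPrimitiveRoot (ζ : K) 6 := hζ.map_of_injective RingOfIntegers.coe_injective
  have hgen : hζK.integralPowerBasis.gen = ζ := by simp
  obtain ⟨f, hf, rfl⟩ := hζK.integralPowerBasis.exists_eq_aeval x
  rw [hζK.integralPowerBasis_dim_eq_two] at hf
  refine ⟨f.coeff 0, f.coeff 1, ?_⟩
  conv_lhs => rw [Polynomial.eq_X_add_C_of_natDegree_le_one (by omega : f.natDegree ≤ 1), hgen]
  simp [add_comm]

theorem absNorm_span_two_mul_sub_one (hζ : IsPrimitiveRoot ζ 6) :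
    Ideal.absNorm (Ideal.span {2 * ζ - 1}) = 3 := by
  have hζK : IsPrimitiveRoot (ζ : K) 6 := hζ.map_of_injective RingOfIntegers.coe_injective
  refine Nat.pow_left_injective two_ne_zero (?_ : _ ^ 2 = 3 ^ 2)
  rw [← map_pow, Ideal.span_singleton_pow, Ideal.absNorm_span_singleton,
    two_mul_sub_one_sq_of_sq_eq_sub_one hζ.sq_eq_sub_one, ← Int.cast_ofNat, ← Int.cast_neg,
    ← eq_intCast (algebraMap ℤ (𝓞 K)), Algebra.norm_algebraMap_of_basis
      hζK.integralPowerBasis.basis, Fintype.card_fin, hζK.integralPowerBasis_dim_eq_two]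
  rfl

end IsPrimitiveRoot

theorem exists_generator_coprime_three_general
    (ζ : 𝓞 (CyclotomicField 6 ℚ)) (hζ : IsPrimitiveRoot ζ 6)
    (I : Ideal (𝓞 (CyclotomicField 6 ℚ)))
    (hcop : Nat.Coprime (Ideal.absNorm I) 3) :
    ∃ a b : ℤ,
      I = Ideal.span {(a : 𝓞 (CyclotomicField 6 ℚ)) +
            (b : 𝓞 (CyclotomicField 6 ℚ)) * (2 * ζ - 1)} ∧
      a % 3 = 1 := by
  have h6 : IsCyclotomicExtension {6} ℚ (CyclotomicField 6 ℚ) :=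
    CyclotomicField.isCyclotomicExtension 6 ℚ
  have : IsCyclotomicExtension {3} ℚ (CyclotomicField 6 ℚ) := .of_two_mul (n := 3) (by decide) h6
  have := IsCyclotomicExtension.Rat.three_pid (CyclotomicField 6 ℚ)
  have hrel := hζ.sq_eq_sub_one
  obtain ⟨g, hg⟩ := (IsPrincipalIdealRing.principal I).principal
  obtain ⟨p, q, rfl⟩ := hζ.exists_int_add_int_mul_eq g
  obtain ⟨k, A, B, hAB⟩ := exists_pow_mul_eq_int_add_int_mul_two_mul_sub_one hrel p q
  have hI : I = Ideal.span {(A : 𝓞 _) + (B : 𝓞 _) * (2 * ζ - 1)} := by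
    rw [hg, Ideal.submodule_span_eq, ← hAB,
      Ideal.span_singleton_mul_left_unit ((isUnit_of_sq_eq_sub_one hrel).pow k)]
  have hA : ¬ 3 ∣ A := fun h3 ↦ by
    have hdvd : 3 ∣ Ideal.absNorm I := by
      rw [hI, ← hζ.absNorm_span_two_mul_sub_one]
      exact Ideal.absNorm_dvd_absNorm_of_le (Ideal.span_singleton_le_span_singleton.2
        (two_mul_sub_one_dvd_int_add_int_mul hrel h3 B))
    exact absurd (Nat.eq_one_of_dvd_coprimes hcop hdvd dvd_rfl) (by norm_num)
  obtain ⟨a, b, hab, ha⟩ := Ideal.exists_span_int_add_int_mul_eq_of_not_dvd (2 * ζ - 1) hA B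
  exact ⟨a, b, hI.trans hab, ha⟩

/-- Every nonzero integral ideal of ℤ[ζ₆] (the ring of integers of ℚ(ζ₆) = ℚ(√-3))
with norm coprime to 3 has a generator of the form a + b√(-3) with a, b ∈ ℤ and
a ≡ 1 (mod 3).  Here √(-3) = 2ζ₆ - 1. -/
theorem exists_generator_coprime_three
    (ζ : 𝓞 (CyclotomicField 6 ℚ)) (hζ : IsPrimitiveRoot ζ 6)
    (I : Ideal (𝓞 (CyclotomicField 6 ℚ))) (hI : I ≠ ⊥)
    (hcop : Nat.Coprime (Ideal.absNorm I) 3) :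
    ∃ a b : ℤ,
      I = Ideal.span {(a : 𝓞 (CyclotomicField 6 ℚ)) +
            (b : 𝓞 (CyclotomicField 6 ℚ)) * (2 * ζ - 1)} ∧
      a % 3 = 1 :=
  exists_generator_coprime_three_general ζ hζ I hcop
end
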